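/- arXiv:2105.08159 — 5 statements merged into one kernel-verified Lean document; each statement's English description precedes it below -/
import Mathlib

section
/- Let $R_m, R_a, R'_a$ be positive reals, $S \geq 0$ a nonnegative real, and $\theta \in \mathbb{R}$. Define the complex number $C = \dfrac{R_m(R'_a+R_a)\cos\theta + i\,R_m(R_a-R'_a)\sin\theta}{R_aR'_a + R_mR_aR'_a S + R_m(R'_a+R_a)}$. Then $|C| < 1$. -/
/-! The numerator is `Rm` times the point `((Ra' + Ra) cos θ, (Ra - Ra') sin θ)` of an ellipse
whose semi-axes are bounded by `Ra' + Ra`, so its modulus is at most `Rm (Ra' + Ra)`, while the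
denominator exceeds `Rm (Ra' + Ra)` by `Ra Ra' (1 + Rm S) > 0`. -/

open Complex

theorem norm_mul_cos_add_I_mul_mul_sin_le (p q θ : ℝ) (hqp : |q| ≤ |p|) :
    ‖((p * Real.cos θ : ℝ) : ℂ) + I * ((q * Real.sin θ : ℝ) : ℂ)‖ ≤ |p| := by
  rw [mul_comm I, norm_add_mul_I, ← Real.sqrt_sq_eq_abs]
  apply Real.sqrt_le_sqrt
  have hq : q ^ 2 ≤ p ^ 2 := sq_le_sq.mpr hqp
  calc (p * Real.cos θ) ^ 2 + (q * Real.sin θ) ^ 2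
      ≤ p ^ 2 * Real.cos θ ^ 2 + p ^ 2 * Real.sin θ ^ 2 := by
        nlinarith [sq_nonneg (Real.sin θ)]
    _ = p ^ 2 := by rw [← mul_add, Real.cos_sq_add_sin_sq, mul_one]

/-- The complex coefficient `C` appearing in the exponential Euler growth factor
has modulus strictly less than `1` when all resistances are positive and the
total conductance is nonnegative. -/
theorem expo_euler_coeff_abs_lt_one
    (Rm Ra Ra' S θ : ℝ) (hRm : 0 < Rm) (hRa : 0 < Ra) (hRa' : 0 < Ra') (hS : 0 ≤ S) :
    ‖((((Rm * (Ra' + Ra) * Real.cos θ : ℝ) : ℂ)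
          + Complex.I * ((Rm * (Ra - Ra') * Real.sin θ : ℝ) : ℂ)) /
        ((Ra * Ra' + Rm * Ra * Ra' * S + Rm * (Ra' + Ra) : ℝ) : ℂ))‖ < 1 := by
  have hP : 0 < Rm * (Ra' + Ra) := by positivity
  have hD : Rm * (Ra' + Ra) < Ra * Ra' + Rm * Ra * Ra' * S + Rm * (Ra' + Ra) := by
    have : 0 ≤ Rm * Ra * Ra' * S := by positivity
    nlinarith [mul_pos hRa hRa']
  have hqp : |Rm * (Ra - Ra')| ≤ |Rm * (Ra' + Ra)| := by
    rw [abs_mul, abs_mul, abs_of_pos (by positivity : 0 < Ra' + Ra)]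
    exact mul_le_mul_of_nonneg_left (abs_le.mpr ⟨by linarith, by linarith⟩) (abs_nonneg Rm)
  rw [norm_div, norm_real, Real.norm_eq_abs, abs_of_pos (hP.trans hD), div_lt_one (hP.trans hD)]
  calc _ ≤ |Rm * (Ra' + Ra)| := norm_mul_cos_add_I_mul_mul_sin_le _ _ θ hqp
    _ = Rm * (Ra' + Ra) := abs_of_pos hP
    _ < _ := hD
end

section
/- Let $V, A, B : \mathbb{R} \to \mathbb{R}$ with $A$ and $B$ differentiable at $t$, $V$ differentiable on a neighborhood of $t$, and $V'(s) = A(s) - B(s)V(s)$ for all $s$ in that neighborhood. Then the local error of one frozen-coefficient RK21 step of size $k$ satisfies $V(t+k) - \Bigl[V(t) + k\bigl(A(t) - B(t)V(t)\bigr) - \tfrac{k^2}{2}B(t)\bigl(A(t) - B(t)V(t)\bigr)\Bigr] = \tfrac{k^2}{2}\bigl(A'(t) - B'(t)V(t)\bigr) + o(k^2)$ as $k \to 0$. In particular, when $A' (t)- B'(t)V(t) \neq 0$ the second-order term of the local error does not vanish, so RK21 is only a first-order method for the time-varying linear equation $V' = A - BV$. -/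
/-!
With `g s = A s - B s * V s`, the solution satisfies the second-order Peano expansion
`V (t + k) = V t + k g t + (k² / 2) g'(t) + o(k²)` with `g'(t) = A' - B' V t - B t g t`,
which needs only `V' = g` near `t` and `g` differentiable at `t`: the remainder vanishes at `0`
and its derivative is `o(k)`, so the mean value inequality makes it `o(k²)`. The frozen step
reproduces the `-B t g t` part of the `k²` coefficient but not `A' - B' V t`.
-/

open Asymptotics Filter Topology Metric

variable {E : Type*} [NormedAddCommGroup E] [NormedSpace ℝ E]

theorem isLittleO_sq_of_hasDerivAt_of_isLittleO {F F' : ℝ → E}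
    (hF : ∀ᶠ k in 𝓝 0, HasDerivAt F (F' k) k) (hF0 : F 0 = 0)
    (hF' : F' =o[𝓝 0] fun k => k) :
    F =o[𝓝 0] fun k => k ^ 2 := by
  refine isLittleO_iff.2 fun ε hε => ?_
  obtain ⟨δ, hδ, hball⟩ := eventually_nhds_iff_ball.1 (hF.and (hF'.def hε))
  filter_upwards [ball_mem_nhds 0 hδ] with k hk
  have hsub : closedBall (0 : ℝ) ‖k‖ ⊆ ball 0 δ :=
    closedBall_subset_ball (by simpa using hk)
  have hmvt := (convex_closedBall (0 : ℝ) ‖k‖).norm_image_sub_le_of_norm_hasDerivWithin_le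
    (f := F) (C := ε * ‖k‖) (x := 0) (y := k)
    (fun x hx => (hball x (hsub hx)).1.hasDerivWithinAt)
    (fun x hx => (hball x (hsub hx)).2.trans
      (mul_le_mul_of_nonneg_left (mem_closedBall_zero_iff.1 hx) hε.le))
    (mem_closedBall_self (norm_nonneg k)) (mem_closedBall_zero_iff.2 le_rfl)
  rw [hF0, sub_zero, sub_zero] at hmvt
  calc ‖F k‖ ≤ ε * ‖k‖ * ‖k‖ := hmvt
    _ = ε * ‖k ^ 2‖ := by rw [norm_pow, sq, mul_assoc]

theorem taylor_two_isLittleO_of_hasDerivAt {V g : ℝ → E} {t : ℝ} {g' : E}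
    (hV : ∀ᶠ s in 𝓝 t, HasDerivAt V (g s) s) (hg : HasDerivAt g g' t) :
    (fun k => V (t + k) - V t - k • g t - (k ^ 2 / 2) • g') =o[𝓝 0] fun k => k ^ 2 := by
  refine isLittleO_sq_of_hasDerivAt_of_isLittleO ?_ (by simp)
    (hasDerivAt_iff_isLittleO_nhds_zero.1 hg)
  have hshift : ∀ᶠ k in 𝓝 (0 : ℝ), HasDerivAt V (g (t + k)) (t + k) :=
    ((continuous_const_add t).tendsto' 0 t (add_zero t)).eventually hV
  filter_upwards [hshift] with k hk
  have hquad : HasDerivAt (fun k : ℝ => (k ^ 2 / 2) • g') (k • g') k := by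
    convert ((hasDerivAt_pow 2 k).div_const 2).smul_const g' using 2
    ring
  convert (((hk.comp_const_add t k).sub_const (V t)).sub
    ((hasDerivAt_id k).smul_const (g t))).sub hquad using 1
  · rfl
  · rw [one_smul]

theorem eq_zero_of_isLittleO_sq {c : ℝ}
    (h : (fun k : ℝ => k ^ 2 / 2 * c) =o[𝓝 0] fun k => k ^ 2) : c = 0 := by
  by_contra hc
  have hsq : (fun k : ℝ => k ^ 2) =o[𝓝 0] fun k => k ^ 2 := by
    rw [← isLittleO_const_mul_left_iff (div_ne_zero hc two_ne_zero)]
    exact h.congr_left fun k => by ring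
  have hne : ∀ᶠ k in 𝓝[≠] (0 : ℝ), k ^ 2 ≠ 0 :=
    eventually_mem_nhdsWithin.mono fun k hk => pow_ne_zero 2 hk
  exact isLittleO_irrefl (hne.frequently.filter_mono nhdsWithin_le_nhds) hsq

/-- Local error of one frozen-coefficient RK21 step of size `k` for the
time-varying linear equation `V' = A - BV`:
`V(t+k) - Φₖ(V(t)) = (k²/2)(A'(t) - B'(t)V(t)) + o(k²)` as `k → 0`; in
particular, when `A'(t) - B'(t)V(t) ≠ 0` the second-order term of the local
error does not vanish, so RK21 is only first-order. -/
theorem rk21_frozen_local_error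
    (V A B : ℝ → ℝ) (t A' B' : ℝ)
    (hA : HasDerivAt A A' t) (hB : HasDerivAt B B' t)
    (U : Set ℝ) (hU : U ∈ nhds t)
    (hV : ∀ s ∈ U, HasDerivAt V (A s - B s * V s) s) :
    ((fun k : ℝ =>
        V (t + k) -
          (V t + k * (A t - B t * V t) - k ^ 2 / 2 * (B t * (A t - B t * V t))) -
          k ^ 2 / 2 * (A' - B' * V t)) =o[nhds 0] fun k : ℝ => k ^ 2) ∧
    (A' - B' * V t ≠ 0 →
      ¬ ((fun k : ℝ =>
          V (t + k) -
            (V t + k * (A t - B t * V t) - k ^ 2 / 2 * (B t * (A t - B t * V t))))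
        =o[nhds 0] fun k : ℝ => k ^ 2)) := by
  have hVt : HasDerivAt V (A t - B t * V t) t := hV t (mem_of_mem_nhds hU)
  have hslope : HasDerivAt (fun s => A s - B s * V s)
      (A' - (B' * V t + B t * (A t - B t * V t))) t :=
    hA.sub (hB.mul hVt)
  have hremainder := taylor_two_isLittleO_of_hasDerivAt (eventually_of_mem hU hV) hslope
  have herror : (fun k : ℝ =>
      V (t + k) - (V t + k * (A t - B t * V t) - k ^ 2 / 2 * (B t * (A t - B t * V t))) -
        k ^ 2 / 2 * (A' - B' * V t)) =o[𝓝 0] fun k : ℝ => k ^ 2 :=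
    hremainder.congr_left fun k => by simp only [smul_eq_mul]; ring
  refine ⟨herror, fun hc hstep => hc (eq_zero_of_isLittleO_sq ?_)⟩
  exact (hstep.sub herror).congr_left fun k => by ring
end

section
/- Let $V, A, B : \mathbb{R} \to \mathbb{R}$ with $A$ and $B$ differentiable at $t$, $V$ differentiable on a neighborhood of $t$, and $V'(s) = A(s) - B(s)V(s)$ for all $s$ in that neighborhood. Let $\Phi_k$ denote one frozen-coefficient classical RK4 step of size $k$ for the affine map $f(x) = A(t) - B(t)x$, so that $\Phi_k(V(t)) = V(t) + k(A(t)-B(t)V(t)) - \tfrac{k^2}{2}B(t)(A(t)-B(t)V(t)) + \tfrac{k^3}{6}B(t)^2(A(t)-B(t)V(t)) - \tfrac{k^4}{24}B(t)^3(A(t)-B(t)V(t))$. Then $V(t+k) - \Phi_k(V(t)) = \tfrac{k^2}{2}\bigl(A'(t) - B'(t)V(t)\bigr) + o(k^2)$ as $k \to 0$; hence when $A'(t) - B'(t)V(t) \neq 0$ the classical fourth-order Runge–Kutta method is rendered a first-order method for the time-varying linear equation $V' = A - BV$. -/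
/-! With `W = A - B V`, the solution satisfies `V' = W` near `t` and `W` is differentiable at `t`
with `W'(t) = A'(t) - B'(t) V(t) - B(t) W(t)`, so second-order Taylor gives
`V(t+k) = V(t) + k W(t) + k²/2 W'(t) + o(k²)`. The frozen RK4 step reproduces
`V(t) + k W(t) - k²/2 B(t) W(t)` up to `O(k³)`, leaving the defect `k²/2 (A'(t) - B'(t) V(t))`. -/

open Asymptotics Filter Topology

theorem HasDerivAt.isLittleO_taylor_two {E : Type*} [NormedAddCommGroup E] [NormedSpace ℝ E]
    {f f' : ℝ → E} {f'' : E} {x : ℝ}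
    (hf : ∀ᶠ y in 𝓝 x, HasDerivAt f (f' y) y) (hf' : HasDerivAt f' f'' x) :
    (fun y => f y - f x - (y - x) • f' x - ((y - x) ^ 2 / 2) • f'') =o[𝓝 x]
      fun y => (y - x) ^ 2 := by
  obtain ⟨δ, hδ, hball⟩ := Metric.eventually_nhds_iff_ball.mp hf
  have hnhds : 𝓝[Metric.ball x δ] x = 𝓝 x := nhdsWithin_eq_nhds.mpr (Metric.ball_mem_nhds x hδ)
  have hquadratic (y : ℝ) : HasDerivAt (fun y => (y - x) • f' x + ((y - x) ^ 2 / 2) • f'')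
      (f' x + (y - x) • f'') y := by
    refine (((hasDerivAt_id y).sub_const x).smul_const (f' x)).fun_add
      ((((hasDerivAt_id y).sub_const x).pow 2).div_const 2 |>.smul_const f'') |>.congr_deriv ?_
    simp
  have hremainder := (convex_ball x δ).isLittleO_pow_succ_real (Metric.mem_ball_self hδ)
    (fun y hy => ((hball y hy).sub (hquadratic y)).hasDerivWithinAt) (n := 1)
    (by rw [hnhds]; simpa [sub_sub] using hf'.isLittleO)
  rw [hnhds] at hremainder
  refine (hremainder.congr_left fun y => ?_).congr_right fun y => by ring
  simp only [Pi.sub_apply, sub_self, zero_smul]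
  module

theorem not_isLittleO_const_mul_pow {𝕜 : Type*} [NontriviallyNormedField 𝕜] {c : 𝕜} (hc : c ≠ 0)
    (n : ℕ) : ¬ (fun k : 𝕜 => c * k ^ n) =o[𝓝 0] fun k => k ^ n := by
  rw [isLittleO_const_mul_left_iff hc]
  refine isLittleO_irrefl
    (Eventually.frequently (f := 𝓝[≠] (0 : 𝕜)) ?_ |>.filter_mono nhdsWithin_le_nhds)
  exact eventually_mem_nhdsWithin.mono fun k (hk : k ≠ 0) => pow_ne_zero n hk

/-- The four RK4 stages for `x' = a - b x` collapse to
`x + (a - b x) (k - b k² / 2 + b² k³ / 6 - b³ k⁴ / 24)`. -/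
noncomputable def rk4AffineStep (a b k x : ℝ) : ℝ :=
  x + k * (a - b * x) - k ^ 2 / 2 * (b * (a - b * x)) + k ^ 3 / 6 * (b ^ 2 * (a - b * x))
    - k ^ 4 / 24 * (b ^ 3 * (a - b * x))

/-- Local error of one frozen-coefficient classical RK4 step of size `k` for the
time-varying linear equation `V' = A - BV`:
`V(t+k) - Φₖ(V(t)) = (k²/2)(A'(t) - B'(t)V(t)) + o(k²)` as `k → 0`; hence when
`A'(t) - B'(t)V(t) ≠ 0` the classical fourth-order Runge–Kutta method is
rendered a first-order method. -/
theorem rk41_frozen_local_error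
    (V A B : ℝ → ℝ) (t A' B' : ℝ)
    (hA : HasDerivAt A A' t) (hB : HasDerivAt B B' t)
    (U : Set ℝ) (hU : U ∈ nhds t)
    (hV : ∀ s ∈ U, HasDerivAt V (A s - B s * V s) s) :
    ((fun k : ℝ =>
        V (t + k) -
          (V t + k * (A t - B t * V t) - k ^ 2 / 2 * (B t * (A t - B t * V t))
            + k ^ 3 / 6 * (B t ^ 2 * (A t - B t * V t))
            - k ^ 4 / 24 * (B t ^ 3 * (A t - B t * V t))) -
          k ^ 2 / 2 * (A' - B' * V t)) =o[nhds 0] fun k : ℝ => k ^ 2) ∧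
    (A' - B' * V t ≠ 0 →
      ¬ ((fun k : ℝ =>
          V (t + k) -
            (V t + k * (A t - B t * V t) - k ^ 2 / 2 * (B t * (A t - B t * V t))
              + k ^ 3 / 6 * (B t ^ 2 * (A t - B t * V t))
              - k ^ 4 / 24 * (B t ^ 3 * (A t - B t * V t))))
        =o[nhds 0] fun k : ℝ => k ^ 2)) := by
  set W : ℝ → ℝ := fun s => A s - B s * V s
  have hW : HasDerivAt W (A' - B' * V t - B t * W t) t :=
    (hA.sub (hB.mul (hV t (mem_of_mem_nhds hU)))).congr_deriv (by ring)
  have hTaylor : (fun k => V (t + k) - V t - k * W t - k ^ 2 / 2 * (A' - B' * V t - B t * W t))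
      =o[𝓝 0] fun k => k ^ 2 := by
    have := (HasDerivAt.isLittleO_taylor_two (eventually_of_mem hU hV) hW).comp_tendsto
      ((continuous_const_add t).tendsto' 0 t (add_zero t))
    simpa [Function.comp_def] using this
  have hHigherOrder : (fun k : ℝ => B t ^ 3 * W t / 24 * k ^ 4 - B t ^ 2 * W t / 6 * k ^ 3)
      =o[𝓝 0] fun k => k ^ 2 :=
    ((isLittleO_pow_pow (by norm_num)).const_mul_left _).sub
      ((isLittleO_pow_pow (by norm_num)).const_mul_left _)
  have hError : (fun k => V (t + k) - rk4AffineStep (A t) (B t) k (V t)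
      - k ^ 2 / 2 * (A' - B' * V t)) =o[𝓝 0] fun k => k ^ 2 :=
    (hTaylor.add hHigherOrder).congr_left fun k => by simp only [rk4AffineStep, W]; ring
  refine ⟨hError, fun hne hFirstOrder =>
    not_isLittleO_const_mul_pow (div_ne_zero hne two_ne_zero) 2 ?_⟩
  exact (hFirstOrder.sub hError).congr_left fun k => by simp only [rk4AffineStep]; ring
end

section
/- Let $V, A, B : \mathbb{R} \to \mathbb{R}$ with $A$ and $B$ differentiable at $t$, $B(t) \neq 0$, $V$ differentiable on a neighborhood of $t$, and $V'(s) = A(s) - B(s)V(s)$ for all $s$ in that neighborhood. Define the frozen-coefficient exponential Euler step $\Phi_k(v) = \tfrac{A(t)}{B(t)} + \bigl(v - \tfrac{A(t)}{B(t)}\bigr)e^{-B(t)k}$. Then $V(t+k) - \Phi_k(V(t)) = \tfrac{k^2}{2}\bigl(A'(t) - B'(t)V(t)\bigr) + o(k^2)$ as $k \to 0$; hence the exponential Euler method is only first-order accurate for the time-varying linear equation $V' = A - BV$ when $A'(t) - B'(t)V(t) \neq 0$. -/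
open Asymptotics Filter Topology

/-! Both `V (t + k)` and the frozen step `Φₖ (V t)` have slope `A t - B t * V t` at `k = 0`,
so they agree to first order. At second order, `V'' t = A' - B' * V t - B t * V' t`, whereas
the frozen solution only has curvature `-B t * V' t`: the difference is `A' - B' * V t`.
Since `V' = A - B * V` near `t`, `V'` is differentiable at `t`, which is all that the
second-order Taylor expansion of `V` needs. -/

theorem isLittleO_sub_taylor_two {E : Type*} [NormedAddCommGroup E] [NormedSpace ℝ E]
    {f f' : ℝ → E} {x : ℝ} {f'' : E}
    (hf : ∀ᶠ y in 𝓝 x, HasDerivAt f (f' y) y) (hf' : HasDerivAt f' f'' x) :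
    (fun y => f y - f x - (y - x) • f' x - ((y - x) ^ 2 / 2) • f'') =o[𝓝 x]
      fun y => (y - x) ^ 2 := by
  obtain ⟨ε, hε, hball⟩ := Metric.eventually_nhds_iff_ball.mp hf
  have hnhds : 𝓝[Metric.ball x ε] x = 𝓝 x :=
    nhdsWithin_eq_nhds.mpr (Metric.ball_mem_nhds x hε)
  have hremainder : ∀ y ∈ Metric.ball x ε,
      HasDerivWithinAt (fun y => f y - (y - x) • f' x - ((y - x) ^ 2 / 2) • f'')
        (f' y - f' x - (y - x) • f'') (Metric.ball x ε) y := by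
    intro y hy
    have hlin : HasDerivAt (fun y => y - x) 1 y := (hasDerivAt_id' y).sub_const x
    have hsq : HasDerivAt (fun y => ((y - x) ^ 2 / 2) • f'') ((y - x) • f'') y :=
      ((hlin.pow 2).div_const 2).smul_const f'' |>.congr_deriv (by norm_num)
    exact ((hball y hy).sub (hlin.smul_const (f' x))).sub hsq |>.hasDerivWithinAt
      |>.congr_deriv (by rw [one_smul])
  have hderiv : (fun y => f' y - f' x - (y - x) • f'') =o[𝓝[Metric.ball x ε] x]
      fun y => (y - x) ^ 1 := by
    simpa [hnhds] using hasDerivAt_iff_isLittleO.mp hf'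
  have h := Convex.isLittleO_pow_succ_real (convex_ball x ε) (Metric.mem_ball_self hε)
    hremainder hderiv
  simp only [hnhds, Nat.reduceAdd, sub_self, zero_smul, ne_eq, OfNat.ofNat_ne_zero,
    not_false_eq_true, zero_pow, zero_div, sub_zero] at h
  refine h.congr_left fun y => ?_
  abel

theorem eq_zero_of_const_mul_isLittleO_self {α : Type*} {l : Filter α} {g : α → ℝ} {c : ℝ}
    (hg : ∃ᶠ x in l, g x ≠ 0) (h : (fun x => c * g x) =o[l] g) : c = 0 := by
  by_contra hc
  exact isLittleO_irrefl hg ((isLittleO_const_mul_left_iff hc).mp h)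

theorem isLittleO_exp_const_mul_sub_taylor_two (c : ℝ) :
    (fun k => Real.exp (c * k) - 1 - c * k - (c * k) ^ 2 / 2) =o[𝓝 0] fun k => k ^ 2 := by
  have h := (Real.exp_sub_sum_range_succ_isLittleO_pow 2).comp_tendsto
    ((continuous_const_mul c).tendsto' 0 0 (mul_zero c))
  have hsq : (fun k : ℝ => (c * k) ^ 2) =O[𝓝 0] fun k => k ^ 2 :=
    (isBigO_const_mul_self (c ^ 2) _ _).congr_left fun k => by ring
  refine (h.trans_isBigO hsq).congr_left fun k => ?_
  simp only [Function.comp_apply, Finset.sum_range_succ, Finset.range_one, Finset.sum_singleton,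
    pow_zero, pow_one, Nat.factorial_zero, Nat.factorial_one, Nat.factorial_two, Nat.cast_one,
    Nat.cast_ofNat, div_one]
  ring

/-- Local error of one frozen-coefficient exponential Euler step of size `k` for
the time-varying linear equation `V' = A - BV`:
`V(t+k) - Φₖ(V(t)) = (k²/2)(A'(t) - B'(t)V(t)) + o(k²)` as `k → 0`; hence the
exponential Euler method is only first-order accurate when
`A'(t) - B'(t)V(t) ≠ 0`. -/
theorem expo_euler_frozen_local_error
    (V A B : ℝ → ℝ) (t A' B' : ℝ)
    (hA : HasDerivAt A A' t) (hB : HasDerivAt B B' t) (hBt : B t ≠ 0)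
    (U : Set ℝ) (hU : U ∈ nhds t)
    (hV : ∀ s ∈ U, HasDerivAt V (A s - B s * V s) s) :
    ((fun k : ℝ =>
        V (t + k) -
          (A t / B t + (V t - A t / B t) * Real.exp (-B t * k)) -
          k ^ 2 / 2 * (A' - B' * V t)) =o[nhds 0] fun k : ℝ => k ^ 2) ∧
    (A' - B' * V t ≠ 0 →
      ¬ ((fun k : ℝ =>
          V (t + k) - (A t / B t + (V t - A t / B t) * Real.exp (-B t * k)))
        =o[nhds 0] fun k : ℝ => k ^ 2)) := by
  have hV_taylor := (isLittleO_sub_taylor_two (eventually_of_mem hU hV)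
    (hA.sub (hB.mul (hV t (mem_of_mem_nhds hU))))).comp_tendsto
    ((continuous_const_add t).tendsto' 0 t (add_zero t))
  simp only [Function.comp_def, add_sub_cancel_left, smul_eq_mul] at hV_taylor
  have hexp_taylor :=
    (isLittleO_exp_const_mul_sub_taylor_two (-B t)).const_mul_left (V t - A t / B t)
  have hexpansion : (fun k => V (t + k) - (A t / B t + (V t - A t / B t) * Real.exp (-B t * k))
      - k ^ 2 / 2 * (A' - B' * V t)) =o[𝓝 0] fun k => k ^ 2 :=
    (hV_taylor.sub hexp_taylor).congr_left fun k => by field_simp; ring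
  refine ⟨hexpansion, fun hC hΦ => hC ?_⟩
  have hquadratic : (fun k => (A' - B' * V t) / 2 * k ^ 2) =o[𝓝 0] fun k => k ^ 2 :=
    (hΦ.sub hexpansion).congr_left fun k => by ring
  have hk : ∃ᶠ k in 𝓝 (0 : ℝ), k ^ 2 ≠ 0 :=
    ((eventually_mem_nhdsWithin (s := {0}ᶜ)).frequently.filter_mono nhdsWithin_le_nhds).mono
      fun k hk => pow_ne_zero 2 hk
  simpa using eq_zero_of_const_mul_isLittleO_self hk hquadratic
end

section
/- Let $B > 0$ and $P$ be reals with $0 < P \leq 4B$, and for $k \geq 0$ define $g(k) = 1 - Pk + \tfrac{BP}{2}k^2$. Then $|g(k)| \leq 1$ if and only if $k \leq 2/B$. -/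
/-!
Since `g(k) - 1 = P k (B k - 2) / 2` and `P k > 0` for `k > 0`, the bound `g(k) ≤ 1` is exactly
`k ≤ 2 / B`. Completing the square, `g(k) = (P / 2B) (B k - 1)² + 1 - P / 2B`, so `g ≥ 1 - P / 2B`,
which is at least `-1` because `P ≤ 4B`: the lower bound `g(k) ≥ -1` never binds.
-/

namespace Heun

noncomputable def growthFactor (B P k : ℝ) : ℝ := 1 - P * k + B * P / 2 * k ^ 2

variable {B P k : ℝ}

theorem growthFactor_sub_one : growthFactor B P k - 1 = P * k / 2 * (B * k - 2) := by
  unfold growthFactor; ring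

theorem growthFactor_eq_sq_add (hB : B ≠ 0) :
    growthFactor B P k = P / (2 * B) * (B * k - 1) ^ 2 + (1 - P / (2 * B)) := by
  unfold growthFactor; field_simp; ring

theorem neg_one_le_growthFactor (hB : 0 < B) (hP : 0 ≤ P) (hPB : P ≤ 4 * B) :
    -1 ≤ growthFactor B P k := by
  have hratio : P / (2 * B) ≤ 2 := by rw [div_le_iff₀ (by positivity)]; linarith
  have hsq : 0 ≤ P / (2 * B) * (B * k - 1) ^ 2 := by positivity
  rw [growthFactor_eq_sq_add hB.ne']
  linarith

theorem growthFactor_le_one_iff (hB : 0 < B) (hP : 0 < P) (hk : 0 ≤ k) :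
    growthFactor B P k ≤ 1 ↔ k ≤ 2 / B := by
  rcases hk.eq_or_lt with rfl | hk
  · simp only [growthFactor, mul_zero, sub_zero, zero_pow two_ne_zero, add_zero, le_refl, true_iff]
    positivity
  rw [← sub_nonpos, growthFactor_sub_one, ← mul_zero (P * k / 2),
    mul_le_mul_iff_right₀ (by positivity), sub_nonpos, le_div_iff₀ hB, mul_comm]

end Heun

/-- With `B > 0`, `0 < P ≤ 4B`, the RK21 quasi-finite-difference growth factor
`g(k) = 1 - Pk + (BP/2)k²` satisfies `|g(k)| ≤ 1` iff `k ≤ 2/B`. -/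
theorem rk21_quasi_fd_stability (B P : ℝ) (hB : 0 < B) (hP : 0 < P) (hPB : P ≤ 4 * B)
    (k : ℝ) (hk : 0 ≤ k) :
    |1 - P * k + B * P / 2 * k ^ 2| ≤ 1 ↔ k ≤ 2 / B := by
  change |Heun.growthFactor B P k| ≤ 1 ↔ _
  rw [abs_le, ← Heun.growthFactor_le_one_iff hB hP hk]
  exact and_iff_right (Heun.neg_one_le_growthFactor hB hP.le hPB)
end
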